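/- arXiv:cs/0702162 — 4 statements merged into one kernel-verified Lean document; each statement's English description precedes it below -/
import Mathlib

section
/- If A is a Z-matrix (all off-diagonal entries nonpositive) that is also a P-matrix (all principal minors positive), then A is invertible and its inverse has all entries nonnegative. -/
/-- A real square matrix is a Z-matrix if all its off-diagonal entries are nonpositive. -/
def IsZMatrix {n : ℕ} (A : Matrix (Fin n) (Fin n) ℝ) : Prop :=
  ∀ i j, i ≠ j → A i j ≤ 0

/-- A real square matrix is a P-matrix if all its principal minors are positive. -/
def IsPMatrix {n : ℕ} (A : Matrix (Fin n) (Fin n) ℝ) : Prop :=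
  ∀ S : Finset (Fin n),
    0 < (A.submatrix (fun i : {x // x ∈ S} => (i : Fin n))
          (fun i : {x // x ∈ S} => (i : Fin n))).det

/-!
Adding `c ≥ 0` at a diagonal position `a` preserves the P-property, because
`det (M + c • eₐeₐᵀ) = det M + c • det M[≠ a]`; hence so does adding any nonnegative diagonal.
Consequently a P-matrix never reverses the sign of a nonzero vector: if `xᵢ (Ax)ᵢ ≤ 0` for all `i`,
then on the support of `x` the matrix `A + D` with `Dᵢᵢ = -(Ax)ᵢ / xᵢ ≥ 0` kills `x`, contradicting
`det (A + D) > 0`. For a Z-matrix with `Ax ≥ 0`, the negative part `y = min x 0` satisfies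
`(Ay)ᵢ ≥ (Ax)ᵢ ≥ 0` wherever `yᵢ < 0`, so `y = 0` and `x ≥ 0`. Applied to the columns of `A⁻¹`,
which `A` maps to standard basis vectors, this gives `A⁻¹ ≥ 0`.
-/

open Matrix Finset

namespace Matrix

variable {ι R : Type*}

section CommRing

variable [CommRing R] [Fintype ι]

theorem submatrix_val_mulVec {m l : Type*} (A : Matrix m ι R) (f : l → m) {S : Finset ι}
    {x : ι → R} (hx : ∀ i ∉ S, x i = 0) :
    A.submatrix f Subtype.val *ᵥ (fun j : S => x j) = (A *ᵥ x) ∘ f := by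
  ext k
  simp only [mulVec, dotProduct, submatrix_apply, Function.comp_apply]
  rw [sum_coe_sort S (fun j => A (f k) j * x j)]
  exact sum_subset (subset_univ S) fun j _ hj => by simp [hx j hj]

variable [DecidableEq ι]

theorem det_updateCol_single_one (M : Matrix ι ι R) (a : ι) :
    (M.updateCol a (Pi.single a 1)).det =
      (M.submatrix (Subtype.val : {i // i ≠ a} → ι) Subtype.val).det := by
  rw [twoBlockTriangular_det' _ (· ≠ a)]
  · have hone : toSquareBlockProp (M.updateCol a (Pi.single a 1)) (fun i => ¬i ≠ a) = 1 := by
      ext ⟨i, hi⟩ ⟨j, hj⟩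
      rw [not_not] at hi hj
      subst hi hj
      simp [toSquareBlockProp, toBlock]
    rw [hone, det_one, mul_one]
    congr 1
    ext i j
    simp [toSquareBlockProp, toBlock, updateCol_ne j.2]
  · rintro i hi j hj
    rw [not_not] at hj
    subst hj
    simp [Pi.single_eq_of_ne hi]

theorem det_add_diagonal_single (M : Matrix ι ι R) (a : ι) (c : R) :
    (M + diagonal (Pi.single a c)).det =
      M.det + c * (M.submatrix (Subtype.val : {i // i ≠ a} → ι) Subtype.val).det := by
  have hcol : M + diagonal (Pi.single a c) =
      M.updateCol a ((fun i => M i a) + c • Pi.single a 1) := by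
    ext i j
    rcases eq_or_ne j a with rfl | hj <;> by_cases hi : i = j <;> simp [*]
  rw [hcol, det_updateCol_add, updateCol_eq_self, det_updateCol_smul, det_updateCol_single_one]

theorem sum_diagonal_single (d : ι → R) : ∑ a, diagonal (Pi.single a (d a)) = diagonal d :=
  (map_sum (diagonalAddMonoidHom ι R) _ _).symm.trans (congrArg diagonal (univ_sum_single d))

end CommRing

section PMatrix

variable [CommRing R] [PartialOrder R] [DecidableEq ι]

def HasPosPrincipalMinors (A : Matrix ι ι R) : Prop :=
  ∀ S : Finset ι, 0 < (A.submatrix (Subtype.val : S → ι) Subtype.val).det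

namespace HasPosPrincipalMinors

variable {A : Matrix ι ι R}

theorem det_submatrix_pos (hA : HasPosPrincipalMinors A) {κ : Type*} [Fintype κ] [DecidableEq κ]
    {f : κ → ι} (hf : f.Injective) : 0 < (A.submatrix f f).det := by
  let e : κ ≃ (univ.map ⟨f, hf⟩ : Finset ι) :=
    (Equiv.ofInjective f hf).trans (Equiv.subtypeEquivRight fun _ => by simp)
  have := hA (univ.map ⟨f, hf⟩)
  rwa [← det_submatrix_equiv_self e] at this

theorem det_pos [Fintype ι] (hA : HasPosPrincipalMinors A) : 0 < A.det := by
  simpa using hA.det_submatrix_pos Function.injective_id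

theorem submatrix (hA : HasPosPrincipalMinors A) {κ : Type*} [DecidableEq κ]
    {f : κ → ι} (hf : f.Injective) : HasPosPrincipalMinors (A.submatrix f f) := fun _ => by
  simpa only [submatrix_submatrix] using hA.det_submatrix_pos (hf.comp Subtype.val_injective)

variable [IsOrderedRing R]

theorem add_diagonal_single (hA : HasPosPrincipalMinors A) (a : ι) {c : R} (hc : 0 ≤ c) :
    HasPosPrincipalMinors (A + diagonal (Pi.single a c)) := by
  intro S
  have hsub : (A + diagonal (Pi.single a c)).submatrix (Subtype.val : S → ι) Subtype.val =
      A.submatrix Subtype.val Subtype.val + diagonal (Pi.single a c ∘ Subtype.val) := by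
    rw [← submatrix_diagonal _ _ Subtype.val_injective]
    rfl
  rw [hsub]
  by_cases ha : a ∈ S
  · have hsingle : Pi.single a c ∘ Subtype.val = Pi.single (⟨a, ha⟩ : S) c := by
      ext k
      simp [Pi.single_apply, Subtype.ext_iff]
    rw [hsingle, det_add_diagonal_single]
    exact add_pos_of_pos_of_nonneg (hA S)
      (mul_nonneg hc ((hA.submatrix Subtype.val_injective).det_submatrix_pos
        Subtype.val_injective).le)
  · have hzero : Pi.single a c ∘ Subtype.val = (0 : S → R) := by
      ext k
      exact Pi.single_eq_of_ne (fun h : (k : ι) = a => ha (h ▸ k.2)) _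
    simpa [hzero] using hA S

theorem add_diagonal [Fintype ι] (hA : HasPosPrincipalMinors A) {d : ι → R} (hd : 0 ≤ d) :
    HasPosPrincipalMinors (A + diagonal d) := by
  have partial_sums : ∀ s : Finset ι,
      HasPosPrincipalMinors (A + ∑ a ∈ s, diagonal (Pi.single a (d a))) := by
    intro s
    induction s using Finset.induction_on with
    | empty => simpa using hA
    | insert a s ha ih =>
      rw [sum_insert ha, add_comm (diagonal _), ← add_assoc]
      exact ih.add_diagonal_single a (hd a)
  simpa [sum_diagonal_single] using partial_sums univ

end HasPosPrincipalMinors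

end PMatrix

theorem mulVec_apply_le_of_le [CommRing R] [PartialOrder R] [IsOrderedRing R] [Fintype ι]
    {A : Matrix ι ι R} (hZ : ∀ i j, i ≠ j → A i j ≤ 0)
    {x y : ι → R} (hyx : y ≤ x) {i : ι} (hi : y i = x i) : (A *ᵥ x) i ≤ (A *ᵥ y) i := by
  rw [← sub_nonneg, ← Pi.sub_apply, ← mulVec_sub, mulVec, dotProduct]
  refine sum_nonneg fun j _ => ?_
  by_cases hij : i = j
  · simp [← hij, hi]
  · exact mul_nonneg_of_nonpos_of_nonpos (hZ i j hij) (sub_nonpos.2 (hyx j))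

section Field

variable [Field R] [LinearOrder R] [IsStrictOrderedRing R] [Fintype ι] [DecidableEq ι]
  {A : Matrix ι ι R}

theorem HasPosPrincipalMinors.eq_zero_of_mul_mulVec_nonpos (hA : HasPosPrincipalMinors A)
    {x : ι → R} (hx : ∀ i, x i * (A *ᵥ x) i ≤ 0) : x = 0 := by
  set S := univ.filter (x · ≠ 0)
  have hS : ∀ i, i ∈ S ↔ x i ≠ 0 := by simp [S]
  let x' : S → R := fun k => x k
  let d : S → R := fun k => -(x' k * (A *ᵥ x) k) / x' k ^ 2
  have hd : 0 ≤ d := fun k => div_nonneg (neg_nonneg.2 (hx k)) (sq_nonneg _)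
  have hker : (A.submatrix Subtype.val Subtype.val + diagonal d) *ᵥ x' = 0 := by
    ext k
    have hk : x' k ≠ 0 := (hS k).1 k.2
    rw [add_mulVec, submatrix_val_mulVec A _ fun i hi => not_not.1 (mt (hS i).2 hi)]
    simp only [Pi.add_apply, mulVec_diagonal, Function.comp_apply, Pi.zero_apply, d]
    field_simp
    ring
  have hx' : x' = 0 := eq_zero_of_mulVec_eq_zero
    ((hA.submatrix Subtype.val_injective).add_diagonal hd).det_pos.ne' hker
  ext i
  by_contra hi
  exact hi (congrFun hx' ⟨i, (hS i).2 hi⟩)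

theorem HasPosPrincipalMinors.nonneg_of_mulVec_nonneg (hA : HasPosPrincipalMinors A)
    (hZ : ∀ i j, i ≠ j → A i j ≤ 0) {x : ι → R} (hAx : 0 ≤ A *ᵥ x) : 0 ≤ x := by
  set y : ι → R := fun i => min (x i) 0
  have hy : y = 0 := hA.eq_zero_of_mul_mulVec_nonpos fun i => by
    rcases le_or_gt 0 (x i) with hi | hi
    · simp [y, min_eq_right hi]
    · have hyi : y i = x i := min_eq_left hi.le
      rw [hyi]
      exact mul_nonpos_of_nonpos_of_nonneg hi.le
        ((hAx i).trans (mulVec_apply_le_of_le hZ (fun j => min_le_left _ _) hyi))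
  intro i
  simpa [y] using congrFun hy i

theorem HasPosPrincipalMinors.inv_apply_nonneg (hA : HasPosPrincipalMinors A)
    (hZ : ∀ i j, i ≠ j → A i j ≤ 0) (i j : ι) : 0 ≤ A⁻¹ i j := by
  have hcol : A *ᵥ (A⁻¹ *ᵥ Pi.single j 1) = Pi.single j 1 := by
    rw [mulVec_mulVec, mul_nonsing_inv _ hA.det_pos.ne'.isUnit, one_mulVec]
  have := hA.nonneg_of_mulVec_nonneg hZ (hcol ▸ Pi.single_nonneg.2 zero_le_one) i
  simpa [mulVec_single_one] using this

end Field

end Matrix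

theorem z_and_p_matrix_inverse_nonneg {n : ℕ} (A : Matrix (Fin n) (Fin n) ℝ)
    (hZ : IsZMatrix A) (hP : IsPMatrix A) :
    IsUnit A ∧ ∀ i j, 0 ≤ A⁻¹ i j := by
  have hA : A.HasPosPrincipalMinors := hP
  exact ⟨(isUnit_iff_isUnit_det A).2 hA.det_pos.ne'.isUnit, hA.inv_apply_nonneg hZ⟩
end

section
/- If A is a Z-matrix that is also a P-matrix, then there exists a vector s with all entries positive such that the vector sᵀA has all entries positive. -/
namespace Matrix

variable {ι κ R : Type*}

theorem det_add_diagonal_eq_sum [Fintype ι] [DecidableEq ι] [CommRing R] (A : Matrix ι ι R)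
    (d : ι → R) :
    (A + diagonal d).det =
      ∑ s : Finset ι, (∏ i ∈ sᶜ, d i) * (A.submatrix ((↑) : s → ι) (↑)).det := by
  change detRowAlternating (A.row + (diagonal d).row) = _
  rw [detRowAlternating.map_add_univ]
  refine Finset.sum_congr rfl fun s _ => ?_
  set P := s.piecewise A.row (1 : Matrix ι ι R).row
  have hrows : s.piecewise A.row (diagonal d).row = sᶜ.piecewise (fun i => d i • P i) P := by
    ext i j
    by_cases hi : i ∈ s <;> simp [P, hi, Finset.piecewise, diagonal_apply, one_apply, Matrix.row]
  rw [hrows, ← det_piecewise_one_eq_submatrix_det]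
  exact detRowAlternating.toMultilinearMap.map_piecewise_smul d P sᶜ

section OrderedRing

variable [CommRing R] [PartialOrder R]

/- `IsZMatrix` and `IsPMatrix` are the case `ι = Fin n`, `R = ℝ` of these. -/
def IsZ (A : Matrix ι ι R) : Prop :=
  ∀ i j, i ≠ j → A i j ≤ 0

def IsP [DecidableEq ι] (A : Matrix ι ι R) : Prop :=
  ∀ s : Finset ι, 0 < (A.submatrix ((↑) : s → ι) (↑)).det

variable {A : Matrix ι ι R}

theorem IsZ.transpose (hZ : A.IsZ) : Aᵀ.IsZ :=
  fun i j hij => hZ j i hij.symm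

theorem IsP.transpose [DecidableEq ι] (hP : A.IsP) : Aᵀ.IsP := fun s => by
  rw [← transpose_submatrix, det_transpose]
  exact hP s

theorem IsP.det_submatrix_pos [DecidableEq ι] [Fintype κ] [DecidableEq κ] (hP : A.IsP)
    {f : κ → ι} (hf : f.Injective) : 0 < (A.submatrix f f).det := by
  let s := Finset.univ.image f
  let e : κ ≃ s := Equiv.ofBijective
    (fun k => ⟨f k, Finset.mem_image_of_mem f (Finset.mem_univ k)⟩)
    ⟨fun k l hkl => hf (congrArg Subtype.val hkl), fun ⟨i, hi⟩ => by
      obtain ⟨k, -, rfl⟩ := Finset.mem_image.1 hi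
      exact ⟨k, rfl⟩⟩
  rw [show A.submatrix f f = (A.submatrix ((↑) : s → ι) (↑)).submatrix e e from rfl,
    det_submatrix_equiv_self]
  exact hP s

theorem IsP.det_pos [Fintype ι] [DecidableEq ι] (hP : A.IsP) : 0 < A.det :=
  hP.det_submatrix_pos Function.injective_id

theorem IsP.submatrix [DecidableEq ι] [Fintype κ] [DecidableEq κ] (hP : A.IsP) {f : κ → ι}
    (hf : f.Injective) : (A.submatrix f f).IsP := fun s => by
  rw [submatrix_submatrix]
  exact hP.det_submatrix_pos (hf.comp Subtype.val_injective)

theorem IsP.det_add_diagonal_pos [Fintype ι] [DecidableEq ι] [IsOrderedRing R] (hP : A.IsP)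
    {d : ι → R} (hd : 0 ≤ d) : 0 < (A + diagonal d).det := by
  rw [det_add_diagonal_eq_sum]
  refine Finset.sum_pos' (fun s _ => mul_nonneg (Finset.prod_nonneg fun i _ => hd i) (hP s).le)
    ⟨Finset.univ, Finset.mem_univ _, ?_⟩
  simpa using hP Finset.univ

end OrderedRing

variable [Fintype ι] [DecidableEq ι] [Field R] [LinearOrder R] [IsStrictOrderedRing R]
  {A : Matrix ι ι R}

theorem IsP.exists_mulVec_pos [Nonempty ι] (hP : A.IsP) {w : ι → R} (hw : ∀ i, 0 < w i) :
    ∃ i, 0 < (A *ᵥ w) i := by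
  by_contra! hAw
  set d : ι → R := fun i => -(A *ᵥ w) i / w i
  have hd : 0 ≤ d := fun i => div_nonneg (neg_nonneg.2 (hAw i)) (hw i).le
  have hker : (A + diagonal d) *ᵥ w = 0 := by
    ext i
    simp only [add_mulVec, Pi.add_apply, mulVec_diagonal, d, div_mul_cancel₀ _ (hw i).ne',
      add_neg_cancel, Pi.zero_apply]
  have hw0 : w ≠ 0 := fun h => (hw (Classical.arbitrary ι)).ne' (congrFun h _)
  exact (hP.det_add_diagonal_pos hd).ne' (exists_mulVec_eq_zero_iff.1 ⟨w, hw0, hker⟩)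

theorem IsP.nonneg_of_mulVec_nonneg (hP : A.IsP) (hZ : A.IsZ) {x : ι → R}
    (hx : 0 ≤ A *ᵥ x) : 0 ≤ x := by
  by_contra hneg
  obtain ⟨i₀, hi₀⟩ : ∃ i, x i < 0 := by simpa [Pi.le_def] using hneg
  have : Nonempty {i // x i < 0} := ⟨⟨i₀, hi₀⟩⟩
  have hPneg := hP.submatrix (Subtype.val_injective (p := fun i => x i < 0))
  obtain ⟨⟨i, hi⟩, hpos⟩ := hPneg.exists_mulVec_pos (w := fun j => -x j) fun j => neg_pos.2 j.2
  have hrest : ∑ j : {j // ¬x j < 0}, A i j * x j ≤ 0 :=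
    Finset.sum_nonpos fun j _ => mul_nonpos_of_nonpos_of_nonneg
      (hZ i j fun h => j.2 (h ▸ hi)) (not_lt.1 j.2)
  have hsplit := Fintype.sum_subtype_add_sum_subtype (fun j => x j < 0) (fun j => A i j * x j)
  have hxi : 0 ≤ ∑ j, A i j * x j := hx i
  simp only [mulVec, dotProduct, submatrix_apply, mul_neg, Finset.sum_neg_distrib] at hpos
  linarith

theorem IsP.exists_pos_mulVec_eq_one (hP : A.IsP) (hZ : A.IsZ) :
    ∃ x : ι → R, (∀ i, 0 < x i) ∧ A *ᵥ x = 1 := by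
  set x := A⁻¹ *ᵥ 1
  have hAx : A *ᵥ x = 1 := by
    rw [mulVec_mulVec, mul_nonsing_inv A hP.det_pos.ne'.isUnit, one_mulVec]
  have hx : 0 ≤ x := hP.nonneg_of_mulVec_nonneg hZ (hAx ▸ zero_le_one)
  refine ⟨x, fun i => (hx i).lt_of_ne fun hxi => ?_, hAx⟩
  have hAxi : (A *ᵥ x) i ≤ 0 := Finset.sum_nonpos fun j _ => by
    rcases eq_or_ne i j with rfl | hij
    · simp [← hxi]
    · exact mul_nonpos_of_nonpos_of_nonneg (hZ i j hij) (hx j)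
  rw [hAx] at hAxi
  exact hAxi.not_gt one_pos

end Matrix

open Matrix

theorem z_and_p_matrix_exists_positive_row_vector {n : ℕ} (A : Matrix (Fin n) (Fin n) ℝ)
    (hZ : IsZMatrix A) (hP : IsPMatrix A) :
    ∃ s : Fin n → ℝ, (∀ i, 0 < s i) ∧ ∀ j, 0 < Matrix.vecMul s A j := by
  obtain ⟨s, hs, hAs⟩ := IsP.exists_pos_mulVec_eq_one (A := Aᵀ) (IsP.transpose hP)
    (IsZ.transpose hZ)
  refine ⟨s, hs, fun j => ?_⟩
  rw [← mulVec_transpose, hAs]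
  exact one_pos
end

section
/- Let p be a noiseless almost equilibrium, i.e., there exist nonnegative scalars v_q such that 0 ≤ p_q(k) ⟂ Σ_{r=1}^Q |H_{qr}(k)|² p_r(k) − |H_{qq}(k)|² v_q ≥ 0 for all k, q, where all |H_{qr}(k)|² > 0. If p ≠ 0, then for every subchannel k, Σ_{r=1}^Q p_r(k) > 0. -/
/-!
Some user `q` transmits on some subchannel, and complementarity there forces
`H q q · v q = ∑ r, H q r · p r > 0`, so `v q > 0`. On a silent subchannel the residual of
user `q` would be `-H q q · v q < 0`, so no subchannel is silent.
-/

open Finset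

lemma exists_pos_of_nonneg_of_ne_zero {α β : Type*} {p : α → β → ℝ}
    (hp : ∀ a b, 0 ≤ p a b) (hne : p ≠ 0) : ∃ a b, 0 < p a b := by
  by_contra! h
  exact hne (funext fun a => funext fun b => le_antisymm (h a b) (hp a b))

section Subchannel

variable {ι : Type*} [Fintype ι] {g x : ι → ℝ} {q : ι} {v : ℝ}

lemma pos_of_active_of_complementary (hg : ∀ r, 0 ≤ g r) (hgq : 0 < g q)
    (hx : ∀ r, 0 ≤ x r) (hxq : 0 < x q) (hcompl : x q * (∑ r, g r * x r - g q * v) = 0) :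
    0 < v := by
  have hresid : ∑ r, g r * x r - g q * v = 0 :=
    (mul_eq_zero.mp hcompl).resolve_left hxq.ne'
  have hload : 0 < ∑ r, g r * x r :=
    sum_pos' (fun r _ => mul_nonneg (hg r) (hx r)) ⟨q, mem_univ q, mul_pos hgq hxq⟩
  exact pos_of_mul_pos_right (by linarith) hgq.le

lemma sum_pos_of_residual_nonneg (hgq : 0 < g q) (hx : ∀ r, 0 ≤ x r) (hv : 0 < v)
    (hresid : 0 ≤ ∑ r, g r * x r - g q * v) : 0 < ∑ r, x r := by
  refine (sum_nonneg fun r _ => hx r).lt_of_ne' fun hsum => ?_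
  have hsilent : ∀ r, x r = 0 := fun r =>
    (sum_eq_zero_iff_of_nonneg fun r _ => hx r).mp hsum r (mem_univ r)
  simp only [hsilent, mul_zero, sum_const_zero, zero_sub, neg_nonneg] at hresid
  exact (mul_pos hgq hv).not_ge hresid

end Subchannel

theorem noiseless_equilibrium_every_subchannel_used_general {Q N : ℕ}
    (H : Fin Q → Fin Q → Fin N → ℝ)   -- H q r k = |H_{qr}(k)|²
    (hH : ∀ q r k, 0 < H q r k)
    (p : Fin Q → Fin N → ℝ) (v : Fin Q → ℝ)
    (hpnonneg : ∀ q k, 0 ≤ p q k)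
    (hresid : ∀ q k, 0 ≤ (∑ r, H q r k * p r k) - H q q k * v q)
    (hcompl : ∀ q k, p q k * ((∑ r, H q r k * p r k) - H q q k * v q) = 0)
    (hpne : p ≠ 0) :
    ∀ k, 0 < ∑ r, p r k := by
  intro k
  obtain ⟨q, k₀, hactive⟩ := exists_pos_of_nonneg_of_ne_zero hpnonneg hpne
  have hv : 0 < v q := pos_of_active_of_complementary (fun r => (hH q r k₀).le) (hH q q k₀)
    (fun r => hpnonneg r k₀) hactive (hcompl q k₀)
  exact sum_pos_of_residual_nonneg (hH q q k) (fun r => hpnonneg r k) hv (hresid q k)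

theorem noiseless_equilibrium_every_subchannel_used {Q N : ℕ}
    (H : Fin Q → Fin Q → Fin N → ℝ)   -- H q r k = |H_{qr}(k)|²
    (hH : ∀ q r k, 0 < H q r k)
    (p : Fin Q → Fin N → ℝ) (v : Fin Q → ℝ)
    (hv : ∀ q, 0 ≤ v q)
    (hpnonneg : ∀ q k, 0 ≤ p q k)
    (hresid : ∀ q k, 0 ≤ (∑ r, H q r k * p r k) - H q q k * v q)
    (hcompl : ∀ q k, p q k * ((∑ r, H q r k * p r k) - H q q k * v q) = 0)
    (hpne : p ≠ 0) :
    ∀ k, 0 < ∑ r, p r k :=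
  noiseless_equilibrium_every_subchannel_used_general H hH p v hpnonneg hresid hcompl hpne
end

section
/- Consider the single-subchannel (N = 1) power control game: find p ∈ ℝ^Q_+ with log(1 + |H_{qq}|²p_q/(σ_q² + Σ_{r≠q}|H_{qr}|²p_r)) = R*_q for all q. If all σ_q² > 0 and all gains are positive, this system has a (nonnegative) solution for some choice of σ > 0 if and only if the matrix Z(R*) with Z_{qq} = |H_{qq}|² and Z_{qr} = −(e^{R*_q}−1)|H_{qr}|² (q ≠ r) is a P-matrix; in that case the solution is unique for every σ > 0 and equals Z(R*)⁻¹ (σ_q²(e^{R*_q}−1))_q. -/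
/-!
The rate equations are linear in the powers: `log (1 + SINR_q) = R*_q` says exactly
`(Z p)_q = σ_q² (e^{R*_q} - 1) > 0`, where `Z = Z(R*)` has nonpositive off-diagonal entries.
For such a Z-matrix, being a P-matrix is equivalent to having a test vector `p > 0` with
`Z p > 0`. Pivoting on the entry `Z₀₀ > 0` gives a Schur complement that is again a Z-matrix,
with `det Z = Z₀₀ · det (Schur complement)`, and test vectors pass from `Z` to the Schur
complement (drop the first coordinate) and back (choose the first coordinate so that `(Z p)₀` is
small and positive). By induction a test vector forces `det Z > 0`, and since it restricts to
every principal submatrix, all principal minors are positive; conversely, positive leading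
minors produce a test vector. A test vector also makes `Z` monotone (`Z x ≥ 0 → x ≥ 0`), so the
unique solution `Z⁻¹ b` is nonnegative.
-/

open Finset

/-- The matrix `Z(R*)` of the single-subchannel power control game. -/
noncomputable def Zmat {Q : ℕ} (H : Fin Q → Fin Q → ℝ) (Rstar : Fin Q → ℝ) :
    Matrix (Fin Q) (Fin Q) ℝ :=
  Matrix.of fun q r => if q = r then H q q else -(Real.exp (Rstar q) - 1) * H q r

open Matrix Filter Topology

theorem Finite.exists_pos_forall_add_mul_pos {ι : Type*} [Finite ι] (f g : ι → ℝ)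
    (hf : ∀ i, 0 < f i) : ∃ ε > 0, ∀ i, 0 < f i + ε * g i := by
  have hnear : ∀ᶠ ε in 𝓝[>] (0 : ℝ), ∀ i, 0 < f i + ε * g i :=
    eventually_all.2 fun i => Tendsto.eventually_const_lt (by simpa using hf i)
      ((Continuous.tendsto (by fun_prop) 0).mono_left nhdsWithin_le_nhds)
  exact (hnear.and self_mem_nhdsWithin).exists.imp fun ε h => ⟨h.2, h.1⟩

theorem Real.log_one_add_div_eq_iff {x D R : ℝ} (hx : 0 ≤ x) (hD : 0 < D) :
    Real.log (1 + x / D) = R ↔ x = (Real.exp R - 1) * D := by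
  have hpos : 0 < 1 + x / D := by positivity
  rw [← Real.exp_eq_exp, Real.exp_log hpos, ← eq_sub_iff_add_eq', div_eq_iff hD.ne']

namespace Matrix

section SchurPivot

variable {K : Type*} [Field K] {n : ℕ}

def schurPivot (A : Matrix (Fin (n + 1)) (Fin (n + 1)) K) : Matrix (Fin n) (Fin n) K :=
  of fun i j => A i.succ j.succ - A i.succ 0 / A 0 0 * A 0 j.succ

theorem det_eq_mul_det_schurPivot (A : Matrix (Fin (n + 1)) (Fin (n + 1)) K) (h : A 0 0 ≠ 0) :
    A.det = A 0 0 * (schurPivot A).det := by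
  let c : Fin (n + 1) → K := Fin.cases 0 fun i => A i.succ 0 / A 0 0
  -- eliminate the first column below the pivot
  let B : Matrix (Fin (n + 1)) (Fin (n + 1)) K := of fun i j => A i j - c i * A 0 j
  have hB0 : ∀ j, B 0 j = A 0 j := fun j => by simp [B, c]
  have hAB : A.det = B.det :=
    det_eq_of_forall_row_eq_smul_add_const c 0 rfl fun i j => by simp only [hB0, B, of_apply]; ring
  have hcol : ∀ i : Fin n, B i.succ 0 = 0 := fun i => by
    simp only [B, c, of_apply, Fin.cases_succ]; field_simp; ring
  rw [hAB, det_succ_column_zero, Fin.sum_univ_succ]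
  simp only [hcol, mul_zero, zero_mul, sum_const_zero, add_zero, Fin.val_zero, pow_zero,
    one_mul, hB0, Fin.succAbove_zero]
  rfl

theorem schurPivot_mulVec_tail (A : Matrix (Fin (n + 1)) (Fin (n + 1)) K) (h : A 0 0 ≠ 0)
    (p : Fin (n + 1) → K) (i : Fin n) :
    (schurPivot A *ᵥ Fin.tail p) i = (A *ᵥ p) i.succ - A i.succ 0 / A 0 0 * (A *ᵥ p) 0 := by
  simp only [mulVec, dotProduct, Fin.sum_univ_succ (n := n), schurPivot, of_apply, Fin.tail,
    sub_mul, sum_sub_distrib, mul_add, mul_sum]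
  field_simp
  ring

theorem schurPivot_submatrix_castLE (A : Matrix (Fin (n + 1)) (Fin (n + 1)) K) {k : ℕ}
    (hk : k ≤ n) :
    (schurPivot A).submatrix (Fin.castLE hk) (Fin.castLE hk) =
      schurPivot (A.submatrix (Fin.castLE (Nat.succ_le_succ hk))
        (Fin.castLE (Nat.succ_le_succ hk))) := by
  ext i j
  simp [schurPivot]

end SchurPivot

theorem eq_nonsing_inv_mulVec_iff {ι α : Type*} [Fintype ι] [DecidableEq ι] [CommRing α]
    {A : Matrix ι ι α} (hA : IsUnit A.det) {p b : ι → α} : p = A⁻¹ *ᵥ b ↔ A *ᵥ p = b := by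
  constructor
  · rintro rfl
    rw [mulVec_mulVec, mul_nonsing_inv _ hA, one_mulVec]
  · rintro rfl
    rw [mulVec_mulVec, nonsing_inv_mul _ hA, one_mulVec]

def IsZMatrix {ι : Type*} (A : Matrix ι ι ℝ) : Prop :=
  ∀ i j, i ≠ j → A i j ≤ 0

namespace IsZMatrix

section

variable {ι : Type*} {A : Matrix ι ι ℝ}

theorem submatrix {κ : Type*} (hA : A.IsZMatrix) {f : κ → ι} (hf : Function.Injective f) :
    (A.submatrix f f).IsZMatrix :=
  fun i j hij => hA (f i) (f j) (hf.ne hij)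

variable [Fintype ι] [DecidableEq ι]

theorem mulVec_le (hA : A.IsZMatrix) {p : ι → ℝ} (hp : ∀ i, 0 ≤ p i) (i : ι) :
    (A *ᵥ p) i ≤ A i i * p i := by
  rw [mulVec, dotProduct, ← add_sum_erase _ _ (mem_univ i), add_le_iff_nonpos_right]
  exact sum_nonpos fun j hj =>
    mul_nonpos_of_nonpos_of_nonneg (hA i j (ne_of_mem_erase hj).symm) (hp j)

theorem diag_pos (hA : A.IsZMatrix) {p : ι → ℝ} (hp : ∀ i, 0 < p i) {i : ι}
    (hAp : 0 < (A *ᵥ p) i) : 0 < A i i :=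
  pos_of_mul_pos_left (hAp.trans_le (hA.mulVec_le (fun j => (hp j).le) i)) (hp i).le

theorem pos_of_mulVec_pos (hA : A.IsZMatrix) {p : ι → ℝ} (hp : ∀ i, 0 ≤ p i) {i : ι}
    (hAp : 0 < (A *ᵥ p) i) : 0 < p i := by
  have := hAp.trans_le (hA.mulVec_le hp i)
  exact (hp i).lt_of_ne fun h => by simp [← h] at this

theorem mulVec_le_submatrix_mulVec {κ : Type*} [Fintype κ] (hA : A.IsZMatrix) {f : κ → ι}
    (hf : Function.Injective f) {p : ι → ℝ} (hp : ∀ i, 0 ≤ p i) (i : κ) :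
    (A *ᵥ p) (f i) ≤ (A.submatrix f f *ᵥ (p ∘ f)) i := by
  have hrange : ∑ j ∈ univ.image f, A (f i) j * p j = (A.submatrix f f *ᵥ (p ∘ f)) i :=
    sum_image fun _ _ _ _ h => hf h
  rw [← hrange]
  refine sum_le_sum_of_subset_of_nonpos' (subset_univ _) fun j _ hj => ?_
  have hji : f i ≠ j := fun h => hj (h ▸ mem_image_of_mem f (mem_univ i))
  exact mul_nonpos_of_nonpos_of_nonneg (hA _ _ hji) (hp j)

theorem nonneg_of_mulVec_nonneg (hA : A.IsZMatrix) {p : ι → ℝ} (hp : ∀ i, 0 < p i)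
    (hAp : ∀ i, 0 < (A *ᵥ p) i) {x : ι → ℝ} (hx : ∀ i, 0 ≤ (A *ᵥ x) i) (i : ι) :
    0 ≤ x i := by
  by_contra! hxi
  obtain ⟨i₀, -, hmin⟩ := exists_min_image univ (fun j => x j / p j) ⟨i, mem_univ i⟩
  set t := x i₀ / p i₀
  have ht : t < 0 := (hmin i (mem_univ i)).trans_lt (div_neg_of_neg_of_pos hxi (hp i))
  -- `x - t • p` is nonnegative and vanishes at `i₀`, yet `A` maps it to a positive vector
  have hy : ∀ j, 0 ≤ (x - t • p) j := fun j => by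
    have := (le_div_iff₀ (hp j)).1 (hmin j (mem_univ j))
    simp only [Pi.sub_apply, Pi.smul_apply, smul_eq_mul]; linarith
  have hy₀ : (x - t • p) i₀ = 0 := by
    simp [t, div_mul_cancel₀ _ (hp i₀).ne']
  have hAy : 0 < (A *ᵥ (x - t • p)) i₀ := by
    rw [mulVec_sub, mulVec_smul, Pi.sub_apply, Pi.smul_apply, smul_eq_mul]
    nlinarith [hx i₀, hAp i₀]
  exact (hA.pos_of_mulVec_pos hy hAy).ne' hy₀

end

section Pivot

variable {n : ℕ} {A : Matrix (Fin (n + 1)) (Fin (n + 1)) ℝ}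

theorem schurPivot (hA : A.IsZMatrix) (h₀ : 0 ≤ A 0 0) : (schurPivot A).IsZMatrix := by
  intro i j hij
  have hcol : A i.succ 0 / A 0 0 ≤ 0 :=
    div_nonpos_of_nonpos_of_nonneg (hA _ _ i.succ_ne_zero) h₀
  have hrow : A 0 j.succ ≤ 0 := hA _ _ j.succ_ne_zero.symm
  have hD : A i.succ j.succ ≤ 0 := hA _ _ (Fin.succ_injective n |>.ne hij)
  simp only [Matrix.schurPivot, of_apply]
  nlinarith

theorem schurPivot_mulVec_tail_pos (hA : A.IsZMatrix) {p : Fin (n + 1) → ℝ}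
    (hp : ∀ i, 0 < p i) (hAp : ∀ i, 0 < (A *ᵥ p) i) (i : Fin n) :
    0 < (Matrix.schurPivot A *ᵥ Fin.tail p) i := by
  have h₀ := hA.diag_pos hp (hAp 0)
  have hcol : A i.succ 0 / A 0 0 ≤ 0 :=
    div_nonpos_of_nonpos_of_nonneg (hA _ _ i.succ_ne_zero) h₀.le
  rw [schurPivot_mulVec_tail A h₀.ne']
  nlinarith [hAp i.succ, hAp 0]

end Pivot

theorem det_pos_of_fin : ∀ {n : ℕ} {A : Matrix (Fin n) (Fin n) ℝ}, A.IsZMatrix →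
    ∀ {p : Fin n → ℝ}, (∀ i, 0 < p i) → (∀ i, 0 < (A *ᵥ p) i) → 0 < A.det
  | 0, _, _, _, _, _ => by simp
  | n + 1, A, hA, p, hp, hAp => by
    have h₀ := hA.diag_pos hp (hAp 0)
    rw [det_eq_mul_det_schurPivot A h₀.ne']
    exact mul_pos h₀ (det_pos_of_fin (hA.schurPivot h₀.le) (fun i => hp i.succ)
      (hA.schurPivot_mulVec_tail_pos hp hAp))

theorem det_pos {ι : Type*} [Fintype ι] [DecidableEq ι] {A : Matrix ι ι ℝ} (hA : A.IsZMatrix)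
    {p : ι → ℝ} (hp : ∀ i, 0 < p i) (hAp : ∀ i, 0 < (A *ᵥ p) i) : 0 < A.det := by
  let e := Fintype.equivFin ι
  rw [← det_submatrix_equiv_self e.symm]
  refine det_pos_of_fin (hA.submatrix e.symm.injective) (p := p ∘ e.symm) (fun i => hp _)
    fun i => ?_
  rw [submatrix_mulVec_equiv, Equiv.symm_symm]
  simpa [Function.comp_def] using hAp (e.symm i)

theorem isPMatrix {n : ℕ} {A : Matrix (Fin n) (Fin n) ℝ} (hA : A.IsZMatrix) {p : Fin n → ℝ}
    (hp : ∀ i, 0 < p i) (hAp : ∀ i, 0 < (A *ᵥ p) i) : IsPMatrix A := fun _ =>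
  det_pos (hA.submatrix Subtype.val_injective) (fun i => hp i) fun i =>
    (hAp i).trans_le (hA.mulVec_le_submatrix_mulVec Subtype.val_injective (fun j => (hp j).le) i)

end IsZMatrix

end Matrix

theorem IsPMatrix.det_submatrix_pos {n k : ℕ} {A : Matrix (Fin n) (Fin n) ℝ} (hA : IsPMatrix A)
    {f : Fin k → Fin n} (hf : Function.Injective f) : 0 < (A.submatrix f f).det := by
  let e : Fin k ≃ {x // x ∈ univ.image f} :=
    (Equiv.ofInjective f hf).trans (Equiv.subtypeEquivRight fun x => by simp)
  have := hA (univ.image f)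
  rwa [← det_submatrix_equiv_self e, submatrix_submatrix] at this

theorem IsPMatrix.det_pos {n : ℕ} {A : Matrix (Fin n) (Fin n) ℝ} (hA : IsPMatrix A) :
    0 < A.det := by
  simpa using hA.det_submatrix_pos Function.injective_id

namespace Matrix.IsZMatrix

theorem exists_mulVec_pos_of_leading_minors_pos : ∀ {n : ℕ} {A : Matrix (Fin n) (Fin n) ℝ},
    A.IsZMatrix → (∀ k (hk : k ≤ n), 0 < (A.submatrix (Fin.castLE hk) (Fin.castLE hk)).det) →
    ∃ p : Fin n → ℝ, (∀ i, 0 < p i) ∧ ∀ i, 0 < (A *ᵥ p) i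
  | 0, _, _, _ => ⟨0, finZeroElim, finZeroElim⟩
  | n + 1, A, hA, hminors => by
    have h₀ : 0 < A 0 0 := by simpa using hminors 1 (by omega)
    have hS : ∀ k (hk : k ≤ n),
        0 < ((Matrix.schurPivot A).submatrix (Fin.castLE hk) (Fin.castLE hk)).det := fun k hk => by
      have hk' : k + 1 ≤ n + 1 := Nat.succ_le_succ hk
      have := hminors (k + 1) hk'
      rw [det_eq_mul_det_schurPivot (A.submatrix (Fin.castLE hk') (Fin.castLE hk')) h₀.ne']
        at this
      rw [schurPivot_submatrix_castLE]
      exact pos_of_mul_pos_right this h₀.le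
    obtain ⟨q, hq, hSq⟩ := exists_mulVec_pos_of_leading_minors_pos (hA.schurPivot h₀.le) hS
    obtain ⟨ε, hε, hεS⟩ := Finite.exists_pos_forall_add_mul_pos _ (fun i => A i.succ 0) hSq
    -- the first coordinate is chosen so that `(A *ᵥ p) 0 = A 0 0 * ε`
    set p : Fin (n + 1) → ℝ := Fin.cons (ε - (∑ j, A 0 j.succ * q j) / A 0 0) q
    have hrow : ∑ j, A 0 j.succ * q j ≤ 0 :=
      sum_nonpos fun j _ => mul_nonpos_of_nonpos_of_nonneg (hA _ _ j.succ_ne_zero.symm) (hq j).le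
    have hAp₀ : (A *ᵥ p) 0 = A 0 0 * ε := by
      simp only [p, mulVec, dotProduct, Fin.sum_univ_succ, Fin.cons_zero, Fin.cons_succ]
      field_simp
      ring
    refine ⟨p, Fin.cases ?_ hq, Fin.cases ?_ fun i => ?_⟩
    · simp only [p, Fin.cons_zero]
      have : (∑ j, A 0 j.succ * q j) / A 0 0 ≤ 0 := div_nonpos_of_nonpos_of_nonneg hrow h₀.le
      linarith
    · rw [hAp₀]; exact mul_pos h₀ hε
    · have hpivot := schurPivot_mulVec_tail A h₀.ne' p i
      have hε_col : A i.succ 0 / A 0 0 * (A 0 0 * ε) = ε * A i.succ 0 := by field_simp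
      rw [hAp₀, hε_col, Fin.tail_cons] at hpivot
      linarith [hεS i]

theorem exists_mulVec_pos {n : ℕ} {A : Matrix (Fin n) (Fin n) ℝ} (hA : A.IsZMatrix)
    (hP : IsPMatrix A) : ∃ p : Fin n → ℝ, (∀ i, 0 < p i) ∧ ∀ i, 0 < (A *ᵥ p) i :=
  hA.exists_mulVec_pos_of_leading_minors_pos fun _ hk =>
    hP.det_submatrix_pos (Fin.castLE_injective hk)

end Matrix.IsZMatrix

section PowerControl

variable {Q : ℕ} {H : Fin Q → Fin Q → ℝ} {Rstar : Fin Q → ℝ}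

theorem zmat_mulVec_apply (p : Fin Q → ℝ) (q : Fin Q) :
    (Zmat H Rstar *ᵥ p) q =
      H q q * p q - (Real.exp (Rstar q) - 1) * ∑ r ∈ univ.erase q, H q r * p r := by
  rw [Matrix.mulVec, dotProduct, ← add_sum_erase _ _ (mem_univ q), mul_sum, sub_eq_add_neg,
    ← sum_neg_distrib]
  congr 1
  · simp [Zmat]
  · refine sum_congr rfl fun r hr => ?_
    simp [Zmat, (ne_of_mem_erase hr).symm]
    ring

theorem zmat_isZMatrix (hH : ∀ q r, 0 ≤ H q r) (hR : ∀ q, 0 ≤ Rstar q) :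
    (Zmat H Rstar).IsZMatrix := fun q r hqr => by
  have : 0 ≤ Real.exp (Rstar q) - 1 := by linarith [Real.one_le_exp (hR q)]
  rw [Zmat, of_apply, if_neg hqr, neg_mul]
  exact neg_nonpos.2 (mul_nonneg this (hH q r))

theorem forall_log_rate_eq_iff_zmat_mulVec_eq (hH : ∀ q r, 0 ≤ H q r) {σsq : Fin Q → ℝ}
    (hσ : ∀ q, 0 < σsq q) {p : Fin Q → ℝ} (hp : ∀ q, 0 ≤ p q) :
    (∀ q, Real.log (1 + H q q * p q / (σsq q + ∑ r ∈ univ.erase q, H q r * p r)) = Rstar q) ↔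
      Zmat H Rstar *ᵥ p = fun q => σsq q * (Real.exp (Rstar q) - 1) := by
  rw [funext_iff]
  refine forall_congr' fun q => ?_
  have hinterference : 0 ≤ ∑ r ∈ univ.erase q, H q r * p r :=
    sum_nonneg fun r _ => mul_nonneg (hH q r) (hp r)
  rw [Real.log_one_add_div_eq_iff (mul_nonneg (hH q q) (hp q)) (by linarith [hσ q]),
    zmat_mulVec_apply]
  constructor <;> intro h <;> linarith

end PowerControl

theorem single_subchannel_game_solvable_iff_P {Q : ℕ}
    (H : Fin Q → Fin Q → ℝ) (hH : ∀ q r, 0 < H q r)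
    (Rstar : Fin Q → ℝ) (hR : ∀ q, 0 < Rstar q) :
    ((∃ σsq : Fin Q → ℝ, (∀ q, 0 < σsq q) ∧
        ∃ p : Fin Q → ℝ, (∀ q, 0 ≤ p q) ∧
          ∀ q, Real.log (1 + H q q * p q /
              (σsq q + ∑ r ∈ Finset.univ.erase q, H q r * p r)) = Rstar q) ↔
      IsPMatrix (Zmat H Rstar)) ∧
    (IsPMatrix (Zmat H Rstar) →
      ∀ σsq : Fin Q → ℝ, (∀ q, 0 < σsq q) →
        ∀ p : Fin Q → ℝ,
          (((∀ q, 0 ≤ p q) ∧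
            ∀ q, Real.log (1 + H q q * p q /
                (σsq q + ∑ r ∈ Finset.univ.erase q, H q r * p r)) = Rstar q) ↔
           p = (Zmat H Rstar)⁻¹.mulVec fun q => σsq q * (Real.exp (Rstar q) - 1))) := by
  have hE : ∀ q, 0 < Real.exp (Rstar q) - 1 := fun q => by
    linarith [Real.add_one_lt_exp (hR q).ne', hR q]
  have hH' : ∀ q r, 0 ≤ H q r := fun q r => (hH q r).le
  have hZ := zmat_isZMatrix hH' fun q => (hR q).le
  refine ⟨⟨?_, fun hP => ?_⟩, fun hP σsq hσ p => ?_⟩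
  · rintro ⟨σsq, hσ, p, hp, hrate⟩
    have hZp : ∀ q, 0 < (Zmat H Rstar *ᵥ p) q := by
      rw [(forall_log_rate_eq_iff_zmat_mulVec_eq hH' hσ hp).1 hrate]
      exact fun q => mul_pos (hσ q) (hE q)
    exact hZ.isPMatrix (fun q => hZ.pos_of_mulVec_pos hp (hZp q)) hZp
  · obtain ⟨p, hp, hZp⟩ := hZ.exists_mulVec_pos hP
    have hσ q : 0 < (Zmat H Rstar *ᵥ p) q / (Real.exp (Rstar q) - 1) := div_pos (hZp q) (hE q)
    refine ⟨_, hσ, p, fun q => (hp q).le, ?_⟩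
    rw [forall_log_rate_eq_iff_zmat_mulVec_eq hH' hσ fun q => (hp q).le]
    exact funext fun q => (div_mul_cancel₀ _ (hE q).ne').symm
  · obtain ⟨p₀, hp₀, hZp₀⟩ := hZ.exists_mulVec_pos hP
    rw [eq_nonsing_inv_mulVec_iff hP.det_pos.ne'.isUnit]
    constructor
    · rintro ⟨hp, hrate⟩
      exact (forall_log_rate_eq_iff_zmat_mulVec_eq hH' hσ hp).1 hrate
    · intro hZp
      have hp := hZ.nonneg_of_mulVec_nonneg hp₀ hZp₀ fun q => by
        rw [hZp]; exact (mul_pos (hσ q) (hE q)).le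
      exact ⟨hp, (forall_log_rate_eq_iff_zmat_mulVec_eq hH' hσ hp).2 hZp⟩
end
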